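/- arXiv:0704.0750 — 2 statements merged into one kernel-verified Lean document; each statement's English description precedes it below -/
import Mathlib

section
/- For n = 7 and every k ≥ 1, the number of meaningful compositions satisfies the recurrence f(k+4) = f(k+3) + 3·f(k+2) − 2·f(k+1) − f(k). -/
/-!
A meaningful composition of order `t + 1` is a walk of length `t` in the directed graph of `ρ`,
so their number is `1ᵀ Aᵗ 1` for the 0/1 matrix `A` of `ρ`. For `n = 7` the quartic
`x⁴ - x³ - 3x² + 2x + 1` annihilates the all-ones vector under `A` (though not `A` itself), a
finite computation; hence `f (t + 1 + m) = (1ᵀ Aᵗ) (Aᵐ 1)` obeys the recurrence in `m` for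
every `t`.
-/

/-- The relation "to be in composition" on `{1,…,n}`: the composition
`∇_j ∘ ∇_i` is meaningful iff `j = i + 1` or `i + j = n + 1`. -/
def rho (n i j : ℕ) : Prop := j = i + 1 ∨ i + j = n + 1

instance (n i j : ℕ) : Decidable (rho n i j) := by unfold rho; infer_instance

/-- A `k`-tuple `(i₁,…,i_k) ∈ {1,…,n}^k` (encoded as `g : Fin k → Fin n`, where
`i_t = (g (t-1) : ℕ) + 1`) is a meaningful composition iff every pair of
consecutive entries is related by `rho`. -/
def Meaningful (n k : ℕ) (g : Fin k → Fin n) : Prop :=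
  ∀ t : Fin (k - 1),
    rho n (((g ⟨t, lt_of_lt_of_le t.2 (Nat.sub_le k 1)⟩ : Fin n) : ℕ) + 1)
          (((g ⟨(t : ℕ) + 1, Nat.add_lt_of_lt_sub t.2⟩ : Fin n) : ℕ) + 1)

instance (n k : ℕ) (g : Fin k → Fin n) : Decidable (Meaningful n k g) := by
  unfold Meaningful; infer_instance

/-- `numComp n k` is the number of meaningful compositions of order `k` on `ℝⁿ`. -/
def numComp (n k : ℕ) : ℕ := Fintype.card {g : Fin k → Fin n // Meaningful n k g}

open Finset Matrix

def compMatrix (R : Type*) [Zero R] [One R] (n : ℕ) : Matrix (Fin n) (Fin n) R :=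
  Matrix.of fun i j => if rho n ((i : ℕ) + 1) ((j : ℕ) + 1) then 1 else 0

lemma meaningful_iff_isChain_ofFn {n k : ℕ} (g : Fin k → Fin n) :
    Meaningful n k g ↔
      (List.ofFn g).IsChain (fun a b : Fin n => rho n ((a : ℕ) + 1) ((b : ℕ) + 1)) := by
  rw [List.isChain_ofFn]
  exact ⟨fun h i hi => h ⟨i, by omega⟩, fun h t => h t (by omega)⟩

lemma meaningful_cons {n k : ℕ} (i : Fin n) (g : Fin (k + 1) → Fin n) :
    Meaningful n (k + 2) (Fin.cons i g) ↔
      rho n ((i : ℕ) + 1) ((g 0 : ℕ) + 1) ∧ Meaningful n (k + 1) g := by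
  simp only [meaningful_iff_isChain_ofFn, List.ofFn_succ, Fin.cons_zero, Fin.cons_succ,
    List.isChain_cons_cons]

def numCompFrom (n k : ℕ) (i : Fin n) : ℕ :=
  #{g : Fin (k + 1) → Fin n | Meaningful n (k + 1) g ∧ g 0 = i}

lemma numComp_succ_eq_sum_numCompFrom (n k : ℕ) :
    numComp n (k + 1) = ∑ i, numCompFrom n k i := by
  rw [numComp, Fintype.card_subtype,
    card_eq_sum_card_fiberwise (f := fun g => g 0) (t := univ) fun _ _ => mem_univ _]
  simp only [numCompFrom, filter_filter]

lemma numCompFrom_zero (n : ℕ) (i : Fin n) : numCompFrom n 0 i = 1 := by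
  rw [numCompFrom, card_eq_one]
  refine ⟨fun _ => i, ?_⟩
  ext g
  simp [Meaningful, funext_iff, Fin.forall_fin_one]

lemma numCompFrom_succ (n k : ℕ) (i : Fin n) :
    numCompFrom n (k + 1) i =
      ∑ j : Fin n, if rho n ((i : ℕ) + 1) ((j : ℕ) + 1) then numCompFrom n k j else 0 := by
  have drop_head : numCompFrom n (k + 1) i =
      #{g : Fin (k + 1) → Fin n |
        Meaningful n (k + 1) g ∧ rho n ((i : ℕ) + 1) ((g 0 : ℕ) + 1)} := by
    refine card_nbij' Fin.tail (fun g => Fin.cons i g) ?_ ?_ ?_ ?_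
    · intro g hg
      simp only [coe_filter, Set.mem_ofPred_eq, mem_univ, true_and] at hg ⊢
      obtain ⟨hg, rfl⟩ := hg
      rw [← Fin.cons_self_tail g, meaningful_cons] at hg
      exact hg.symm
    · intro g hg
      simp only [coe_filter, Set.mem_ofPred_eq, mem_univ, true_and] at hg ⊢
      exact ⟨(meaningful_cons i g).2 hg.symm, Fin.cons_zero _ _⟩
    · intro g hg
      simp only [coe_filter, Set.mem_ofPred_eq, mem_univ, true_and] at hg
      obtain ⟨-, rfl⟩ := hg
      exact Fin.cons_self_tail g
    · intro g _
      exact Fin.tail_cons _ _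
  rw [drop_head, card_eq_sum_card_fiberwise (f := fun g => g 0) (t := univ) fun _ _ => mem_univ _]
  refine sum_congr rfl fun j _ => ?_
  rw [filter_filter]
  split_ifs with h
  · exact congrArg card <| filter_congr fun g _ =>
      ⟨fun hg => ⟨hg.1.1, hg.2⟩, fun hg => ⟨⟨hg.1, hg.2 ▸ h⟩, hg.2⟩⟩
  · exact card_eq_zero.2 <| filter_eq_empty_iff.2 fun g _ hg => h (hg.2 ▸ hg.1.2)

lemma numCompFrom_eq_mulVec_pow {R : Type*} [Semiring R] (n k : ℕ) (i : Fin n) :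
    (numCompFrom n k i : R) = (compMatrix R n ^ k *ᵥ 1) i := by
  induction k generalizing i with
  | zero => simp [numCompFrom_zero]
  | succ k ih =>
    rw [numCompFrom_succ, pow_succ', ← mulVec_mulVec]
    simp [mulVec, dotProduct, compMatrix, ih]

lemma numComp_add_succ_eq_dotProduct {R : Type*} [Semiring R] (n t m : ℕ) :
    (numComp n (t + 1 + m) : R) =
      (1 ᵥ* compMatrix R n ^ t) ⬝ᵥ (compMatrix R n ^ m *ᵥ 1) := by
  rw [add_right_comm, numComp_succ_eq_sum_numCompFrom, Nat.cast_sum]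
  simp only [numCompFrom_eq_mulVec_pow]
  rw [← one_dotProduct, pow_add, ← mulVec_mulVec, dotProduct_mulVec]

lemma compMatrix_seven_pow_four_mulVec_one :
    compMatrix ℤ 7 ^ 4 *ᵥ 1 =
      compMatrix ℤ 7 ^ 3 *ᵥ 1 + (3 : ℤ) • (compMatrix ℤ 7 ^ 2 *ᵥ 1)
        - (2 : ℤ) • (compMatrix ℤ 7 *ᵥ 1) - 1 := by
  decide

/-- For `n = 7` and every `k ≥ 1`, the number of meaningful compositions
satisfies the recurrence f(k+4) = f(k+3) + 3·f(k+2) − 2·f(k+1) − f(k). -/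
theorem numComp_seven_recurrence (k : ℕ) (hk : 1 ≤ k) :
    (numComp 7 (k + 4) : ℤ) = numComp 7 (k + 3) + 3 * numComp 7 (k + 2) - 2 * numComp 7 (k + 1) - numComp 7 k := by
  obtain ⟨t, rfl⟩ := Nat.exists_eq_add_of_le' hk
  rw [show numComp 7 (t + 1) = numComp 7 (t + 1 + 0) from rfl]
  simp only [numComp_add_succ_eq_dotProduct (R := ℤ), compMatrix_seven_pow_four_mulVec_one,
    dotProduct_add, dotProduct_sub, dotProduct_smul, smul_eq_mul, pow_one, pow_zero, one_mulVec]
end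

section
/- For n = 8 and every k ≥ 1, the number of meaningful compositions satisfies the recurrence f(k+4) = 4·f(k+2) − 3·f(k). -/
/-!
Meaningful compositions of order `k + 1` are walks of length `k` in the digraph of `ρ`, so
`f (k + 1) = 𝟙ᵀ Aᵏ 𝟙` for the transfer matrix `A` of `ρ`. For `n = 8` the vector of in-degrees
`𝟙ᵀ A` is an eigenvector of `A²` with eigenvalue `3`, whence `f (k + 2) = 3 f k` for `k ≥ 2`;
the case `k = 1` is `f 3 = 24 = 3 f 1`. The recurrence follows because `9 = 4 · 3 - 3`.
-/

open Matrix

theorem Fintype.card_subtype_eq_sum_card_fiber {α β : Type*} [Fintype α] [Fintype β]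
    [DecidableEq β] (P : α → Prop) [DecidablePred P] (f : α → β) :
    Fintype.card {a // P a} = ∑ b, Fintype.card {a // P a ∧ f a = b} := by
  simp only [Fintype.card_subtype, ← Finset.filter_filter]
  exact Finset.card_eq_sum_card_fiberwise fun _ _ => Finset.mem_univ _

theorem meaningful_succ_iff {n m : ℕ} {g : Fin (m + 1) → Fin n} :
    Meaningful n (m + 1) g ↔ ∀ t : Fin m, rho n (g t.castSucc + 1) (g t.succ + 1) :=
  Iff.rfl

theorem meaningful_snoc_iff {n k : ℕ} {g : Fin (k + 1) → Fin n} {j : Fin n} :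
    Meaningful n (k + 2) (Fin.snoc g j) ↔
      Meaningful n (k + 1) g ∧ rho n (g (Fin.last k) + 1) (j + 1) := by
  rw [meaningful_succ_iff, Fin.forall_fin_succ', meaningful_succ_iff]
  simp only [Fin.succ_castSucc, Fin.snoc_castSucc, Fin.succ_last, Fin.snoc_last]

def transferMatrix (n : ℕ) : Matrix (Fin n) (Fin n) ℕ :=
  of fun i j => if rho n (i + 1) (j + 1) then 1 else 0

def numCompEndingAt (n k : ℕ) (j : Fin n) : ℕ :=
  Fintype.card {g : Fin (k + 1) → Fin n // Meaningful n (k + 1) g ∧ g (Fin.last k) = j}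

theorem numComp_succ (n k : ℕ) : numComp n (k + 1) = ∑ j, numCompEndingAt n k j :=
  Fintype.card_subtype_eq_sum_card_fiber (Meaningful n (k + 1)) fun g => g (Fin.last k)

theorem numCompEndingAt_zero (n : ℕ) (j : Fin n) : numCompEndingAt n 0 j = 1 :=
  Fintype.card_eq_one_iff.mpr ⟨⟨fun _ => j, fun t => t.elim0, rfl⟩,
    fun ⟨_, _, hg⟩ => Subtype.ext <| funext fun t => by rw [Fin.fin_one_eq_zero t]; exact hg⟩

def meaningfulSnocEquiv (n k : ℕ) (j : Fin n) :
    {g : Fin (k + 1) → Fin n // Meaningful n (k + 1) g ∧ rho n (g (Fin.last k) + 1) (j + 1)} ≃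
      {g : Fin (k + 2) → Fin n // Meaningful n (k + 2) g ∧ g (Fin.last (k + 1)) = j} where
  toFun g := ⟨Fin.snoc g.1 j, meaningful_snoc_iff.mpr g.2, Fin.snoc_last _ _⟩
  invFun g := ⟨Fin.init g.1, meaningful_snoc_iff.mp <| by
    obtain ⟨g, hg, rfl⟩ := g
    rwa [Fin.snoc_init_self]⟩
  left_inv g := Subtype.ext (Fin.init_snoc (α := fun _ => Fin n) j g.1)
  right_inv g := Subtype.ext <| by
    obtain ⟨g, -, rfl⟩ := g
    exact Fin.snoc_init_self g

theorem numCompEndingAt_succ (n k : ℕ) (j : Fin n) :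
    numCompEndingAt n (k + 1) j = (numCompEndingAt n k ᵥ* transferMatrix n) j := by
  rw [numCompEndingAt, ← Fintype.card_congr (meaningfulSnocEquiv n k j),
    Fintype.card_subtype_eq_sum_card_fiber _ fun g => g (Fin.last k)]
  refine Finset.sum_congr rfl fun i _ => ?_
  by_cases hij : rho n (i + 1) (j + 1)
  · simp only [transferMatrix, of_apply, hij, if_true, mul_one, numCompEndingAt]
    exact Fintype.card_congr <| Equiv.subtypeEquivRight fun g =>
      ⟨fun ⟨⟨hg, _⟩, hi⟩ => ⟨hg, hi⟩, fun ⟨hg, hi⟩ => ⟨⟨hg, hi ▸ hij⟩, hi⟩⟩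
  · simp only [transferMatrix, of_apply, hij, if_false, mul_zero]
    exact Fintype.card_eq_zero_iff.mpr ⟨fun ⟨_, ⟨_, hrho⟩, hi⟩ => hij (hi ▸ hrho)⟩

theorem numCompEndingAt_eq_one_vecMul_pow (n k : ℕ) :
    numCompEndingAt n k = 1 ᵥ* transferMatrix n ^ k := by
  induction k with
  | zero => funext j; rw [numCompEndingAt_zero, pow_zero, vecMul_one]; rfl
  | succ k ih => funext j; rw [numCompEndingAt_succ, ih, pow_succ, vecMul_vecMul]

theorem numComp_succ_eq_sum_one_vecMul_pow (n k : ℕ) :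
    numComp n (k + 1) = ∑ j, (1 ᵥ* transferMatrix n ^ k) j := by
  rw [numComp_succ, numCompEndingAt_eq_one_vecMul_pow]

-- This fails without the factor `1 ᵥ*`: `A ^ 3 ≠ 3 • A`.
theorem one_vecMul_transferMatrix_eight_pow_three :
    (1 : Fin 8 → ℕ) ᵥ* transferMatrix 8 ^ 3 = 3 • (1 ᵥ* transferMatrix 8) := by
  decide

theorem numComp_eight_three : numComp 8 3 = 3 * numComp 8 1 := by
  rw [numComp_succ_eq_sum_one_vecMul_pow, numComp_succ_eq_sum_one_vecMul_pow]
  decide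

theorem one_vecMul_transferMatrix_eight_pow_add_three (m : ℕ) :
    (1 : Fin 8 → ℕ) ᵥ* transferMatrix 8 ^ (m + 3) = 3 • (1 ᵥ* transferMatrix 8 ^ (m + 1)) := by
  rw [add_comm, pow_add, ← vecMul_vecMul, one_vecMul_transferMatrix_eight_pow_three,
    smul_vecMul, vecMul_vecMul, ← pow_succ']

theorem numComp_eight_add_two : ∀ {k : ℕ}, 1 ≤ k → numComp 8 (k + 2) = 3 * numComp 8 k
  | 1, _ => numComp_eight_three
  | m + 2, _ => by
    simp only [numComp_succ_eq_sum_one_vecMul_pow, one_vecMul_transferMatrix_eight_pow_add_three,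
      Pi.smul_apply, smul_eq_mul, Finset.mul_sum]

/-- For `n = 8` and every `k ≥ 1`, the number of meaningful compositions
satisfies the recurrence f(k+4) = 4·f(k+2) − 3·f(k). -/
theorem numComp_eight_recurrence (k : ℕ) (hk : 1 ≤ k) :
    (numComp 8 (k + 4) : ℤ) = 4 * numComp 8 (k + 2) - 3 * numComp 8 k := by
  have h₁ := numComp_eight_add_two hk
  have h₂ := numComp_eight_add_two (k := k + 2) (by omega)
  rw [h₂, h₁]
  push_cast
  ring
end
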